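/- Let f : ℝ → ℝ be periodic with period 1, piecewise-linear and injective on [0,1), and suppose f has pieces f₁, …, f_k defined on subintervals I₁, …, I_k of [0,1), where f_j(x) = m_j x + c_j and |m₁| = |m₂| = ⋯ = |m_k| = m. Then for all α ∈ ℝ and N ∈ ℕ, the union over all pieces of the sets of interior gap lengths has at most three elements. In particular, every interior gap length equals m·v for one of the at most three gap values v of the set {frac(dα) : 1 ≤ d ≤ N} on the circle. -/

import Mathlib

/-- The set of distinct values `f (d*α + β)` for `1 ≤ d ≤ N`. -/
def orbitSet (f : ℝ → ℝ) (α β : ℝ) (N : ℕ) : Set ℝ :=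
  {y | ∃ d : ℕ, 1 ≤ d ∧ d ≤ N ∧ y = f (d * α + β)}

/-- Gaps between consecutive (nearest-neighbor) elements of a set of reals. -/
def consGaps (S : Set ℝ) : Set ℝ :=
  {g | ∃ a ∈ S, ∃ b ∈ S, a < b ∧ (∀ x ∈ S, x ≤ a ∨ b ≤ x) ∧ g = b - a}

/-- The gap length set `G_{f,α,β,N}`: consecutive gaps together with the
extremal gap `s₁ - inf f + sup f - s_n`. -/
def gapSet (f : ℝ → ℝ) (α β : ℝ) (N : ℕ) : Set ℝ :=
  consGaps (orbitSet f α β N) ∪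
    {sInf (orbitSet f α β N) - sInf (Set.range f) + sSup (Set.range f) -
      sSup (orbitSet f α β N)}

/-!
On a piece `f_j x = m_j x + c_j` the function is strictly monotone or antitone with slope `±m`,
so two values `f (dα) < f (d'α)` that are adjacent among the `f (eα)` come from points
`frac (dα)`, `frac (d'α)` of the piece with no `frac (eα)` strictly between them, and the gap is
`m` times their distance. By the three gap theorem this distance is `A`, `1 - B` or `A + (1 - B)`,
where `A` is the smallest positive and `B` the largest of the points `frac (eα)`, `1 ≤ e ≤ N`.

For the three gap theorem, let `P = frac (pα) < Q = frac (qα)` be neighbours and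
`A = frac (uα)`, `B = frac (wα)`. If `A < Q - P` then `p + u > N`, since otherwise
`frac ((p + u)α) = P + A` would lie between them; likewise `1 - B < Q - P` forces `q + w > N`.
When both hold, one of the indices `p + u - w`, `q + w - u` lies in `[1, N]` and carries the point
`P + A + (1 - B)` or `Q - A - (1 - B)`, so `Q - P ≤ A + (1 - B)`. Conversely, for `p < q` the
indices `q - p` and `p + u - q` give `A ≤ Q - P` and, if `A < Q - P`, `A + (1 - B) ≤ Q - P`;
for `q < p` the indices `p - q` and `q + w - p` do the same with the roles of `A` and `1 - B`
exchanged.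
-/

open Set Int

theorem Function.Periodic.map_fract {R β : Type*} [Ring R] [LinearOrder R] [FloorRing R]
    {f : R → β} (h : Function.Periodic f 1) (x : R) : f (fract x) = f x := by
  have := h.sub_int_mul_eq (x := x) ⌊x⌋
  rwa [mul_one, self_sub_floor] at this

theorem mapsTo_uIoo_affine {μ : ℝ} (hμ : μ ≠ 0) (c x y : ℝ) :
    MapsTo (fun z => μ * z + c) (uIoo x y) (uIoo (μ * x + c) (μ * y + c)) := by
  intro z hz
  simp only [uIoo_eq_union, mem_union, mem_Ioo] at hz ⊢
  rcases hμ.lt_or_gt with hμ | hμ <;> rcases hz with ⟨h₁, h₂⟩ | ⟨h₁, h₂⟩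
  · exact .inr ⟨by nlinarith, by nlinarith⟩
  · exact .inl ⟨by nlinarith, by nlinarith⟩
  · exact .inl ⟨by nlinarith, by nlinarith⟩
  · exact .inr ⟨by nlinarith, by nlinarith⟩

theorem notMem_uIoo_of_affineOn {g : ℝ → ℝ} {s : Set ℝ} (hs : s.OrdConnected) {μ c x y z : ℝ}
    (hg : ∀ z ∈ s, g z = μ * z + c) (hx : x ∈ s) (hy : y ∈ s) (hxy : g x ≠ g y)
    (hz : g z ∉ uIoo (g x) (g y)) : z ∉ uIoo x y := by
  intro hzxy
  have hμ : μ ≠ 0 := by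
    rintro rfl
    exact hxy (by rw [hg x hx, hg y hy, zero_mul, zero_mul])
  rw [hg x hx, hg y hy, hg z (hs.uIcc_subset hx hy (uIoo_subset_uIcc_self hzxy))] at hz
  exact hz (mapsTo_uIoo_affine hμ c x y hzxy)

theorem sub_eq_abs_mul_abs_sub_of_affineOn {g : ℝ → ℝ} {s : Set ℝ} {μ c x y : ℝ}
    (hg : ∀ z ∈ s, g z = μ * z + c) (hx : x ∈ s) (hy : y ∈ s) (hxy : g x < g y) :
    g y - g x = |μ| * |y - x| := by
  rw [← abs_mul, ← abs_of_pos (sub_pos.2 hxy), hg x hx, hg y hy]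
  congr 1
  ring

theorem Set.ncard_triple_le {α : Type*} (a b c : α) : ({a, b, c} : Set α).ncard ≤ 3 := by
  classical
  simpa [← Finset.coe_insert, ← Finset.coe_singleton, ncard_coe_finset] using
    Finset.card_le_three (a := a) (b := b) (c := c)

def fractOrbit (α : ℝ) (N : ℤ) : Set ℝ := (fun e : ℤ => fract (e * α)) '' Icc 1 N

namespace ThreeGap

variable {α : ℝ} {N p q u w : ℤ}

theorem fract_mem_fractOrbit (h₁ : 1 ≤ p) (h₂ : p ≤ N) : fract (p * α) ∈ fractOrbit α N :=
  ⟨p, ⟨h₁, h₂⟩, rfl⟩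

theorem lt_add_of_fract_lt_sub (hp : 1 ≤ p) (hu : 1 ≤ u) (hu₀ : 0 < fract (u * α))
    (hgap : ∀ z ∈ fractOrbit α N, z ∉ Ioo (fract (p * α)) (fract (q * α)))
    (h : fract (u * α) < fract (q * α) - fract (p * α)) : N < p + u := by
  by_contra! hN
  have hv : fract ((p + u : ℤ) * α) = fract (p * α) + fract (u * α) :=
    fract_eq_iff.2 ⟨by linarith [fract_nonneg (p * α)], by linarith [fract_lt_one (q * α)],
      ⌊p * α⌋ + ⌊u * α⌋, by unfold fract; push_cast; ring⟩
  exact hgap _ (fract_mem_fractOrbit (by omega) hN) (hv ▸ ⟨by linarith, by linarith⟩)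

theorem lt_add_of_one_sub_fract_lt_sub (hq : 1 ≤ q) (hw : 1 ≤ w)
    (hgap : ∀ z ∈ fractOrbit α N, z ∉ Ioo (fract (p * α)) (fract (q * α)))
    (h : 1 - fract (w * α) < fract (q * α) - fract (p * α)) : N < q + w := by
  by_contra! hN
  have hv : fract ((q + w : ℤ) * α) = fract (q * α) + fract (w * α) - 1 :=
    fract_eq_iff.2 ⟨by linarith [fract_nonneg (p * α)],
      by linarith [fract_lt_one (q * α), fract_lt_one (w * α)],
      ⌊q * α⌋ + ⌊w * α⌋ + 1, by unfold fract; push_cast; ring⟩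
  exact hgap _ (fract_mem_fractOrbit (by omega) hN)
    (hv ▸ ⟨by linarith, by linarith [fract_lt_one (w * α)]⟩)

theorem sub_le_add_of_lt_add (hp : p ∈ Icc 1 N) (hq : q ∈ Icc 1 N) (hu : u ∈ Icc 1 N)
    (hw : w ∈ Icc 1 N) (hu₀ : 0 < fract (u * α))
    (hgap : ∀ z ∈ fractOrbit α N, z ∉ Ioo (fract (p * α)) (fract (q * α)))
    (hpu : N < p + u) (hqw : N < q + w) :
    fract (q * α) - fract (p * α) ≤ fract (u * α) + (1 - fract (w * α)) := by
  rw [mem_Icc] at hp hq hu hw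
  have hP₀ := fract_nonneg (p * α)
  have hQ₁ := fract_lt_one (q * α)
  have hB₁ := fract_lt_one (w * α)
  by_contra! h
  -- (p + u - w) + (q + w - u) = p + q ≤ 2N, so one of the two indices is at most N
  rcases le_or_gt (p + u - w) N with hN | hN
  · have hv : fract ((p + u - w : ℤ) * α) = fract (p * α) + fract (u * α) + (1 - fract (w * α)) :=
      fract_eq_iff.2 ⟨by linarith, by linarith,
        ⌊p * α⌋ + ⌊u * α⌋ - ⌊w * α⌋ - 1, by unfold fract; push_cast; ring⟩
    exact hgap _ (fract_mem_fractOrbit (by omega) hN) (hv ▸ ⟨by linarith, by linarith⟩)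
  · have hv : fract ((q + w - u : ℤ) * α) = fract (q * α) - fract (u * α) - (1 - fract (w * α)) :=
      fract_eq_iff.2 ⟨by linarith, by linarith,
        ⌊q * α⌋ + ⌊w * α⌋ - ⌊u * α⌋ + 1, by unfold fract; push_cast; ring⟩
    exact hgap _ (fract_mem_fractOrbit (p := q + w - u) (by omega) (by omega))
      (hv ▸ ⟨by linarith, by linarith⟩)

theorem fract_le_sub_of_lt (hp : 1 ≤ p) (hq : q ≤ N) (hpq : p < q)
    (hPQ : fract (p * α) < fract (q * α))
    (hmin : ∀ z ∈ fractOrbit α N, 0 < z → fract (u * α) ≤ z) :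
    fract (u * α) ≤ fract (q * α) - fract (p * α) := by
  have hv : fract ((q - p : ℤ) * α) = fract (q * α) - fract (p * α) :=
    fract_eq_iff.2 ⟨by linarith, by linarith [fract_lt_one (q * α), fract_nonneg (p * α)],
      ⌊q * α⌋ - ⌊p * α⌋, by unfold fract; push_cast; ring⟩
  exact hv ▸ hmin _ (fract_mem_fractOrbit (by omega) (by omega)) (hv ▸ sub_pos.2 hPQ)

theorem add_le_sub_of_lt_of_lt_add (hq : q ≤ N) (hu : u ≤ N) (hpq : p < q) (hpu : N < p + u)
    (hmax : ∀ z ∈ fractOrbit α N, z ≤ fract (w * α))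
    (h : fract (u * α) < fract (q * α) - fract (p * α)) :
    fract (u * α) + (1 - fract (w * α)) ≤ fract (q * α) - fract (p * α) := by
  have hv : fract ((p + u - q : ℤ) * α) = fract (p * α) + fract (u * α) + 1 - fract (q * α) :=
    fract_eq_iff.2 ⟨by linarith [fract_nonneg (p * α), fract_nonneg (u * α), fract_lt_one (q * α)],
      by linarith, ⌊p * α⌋ + ⌊u * α⌋ - ⌊q * α⌋ - 1, by unfold fract; push_cast; ring⟩
  linarith [hv ▸ hmax _ (fract_mem_fractOrbit (α := α) (by omega) (by omega))]

theorem one_sub_fract_le_sub_of_lt (hq : 1 ≤ q) (hp : p ≤ N) (hqp : q < p)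
    (hPQ : fract (p * α) < fract (q * α))
    (hmax : ∀ z ∈ fractOrbit α N, z ≤ fract (w * α)) :
    1 - fract (w * α) ≤ fract (q * α) - fract (p * α) := by
  have hv : fract ((p - q : ℤ) * α) = 1 - (fract (q * α) - fract (p * α)) :=
    fract_eq_iff.2 ⟨by linarith [fract_lt_one (q * α), fract_nonneg (p * α)], by linarith,
      ⌊p * α⌋ - ⌊q * α⌋ - 1, by unfold fract; push_cast; ring⟩
  linarith [hv ▸ hmax _ (fract_mem_fractOrbit (α := α) (by omega) (by omega))]

theorem add_le_sub_of_gt_of_lt_add (hp : p ≤ N) (hw : w ≤ N) (hqp : q < p) (hqw : N < q + w)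
    (hmin : ∀ z ∈ fractOrbit α N, 0 < z → fract (u * α) ≤ z)
    (h : 1 - fract (w * α) < fract (q * α) - fract (p * α)) :
    fract (u * α) + (1 - fract (w * α)) ≤ fract (q * α) - fract (p * α) := by
  have hv : fract ((q + w - p : ℤ) * α) = fract (q * α) - fract (p * α) - (1 - fract (w * α)) :=
    fract_eq_iff.2 ⟨by linarith,
      by linarith [fract_lt_one (q * α), fract_nonneg (p * α), fract_lt_one (w * α)],
      ⌊q * α⌋ + ⌊w * α⌋ - ⌊p * α⌋ + 1, by unfold fract; push_cast; ring⟩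
  linarith [hv ▸ hmin _ (fract_mem_fractOrbit (α := α) (by omega) (by omega)) (by linarith)]

theorem sub_mem_three_gaps (hp : p ∈ Icc 1 N) (hq : q ∈ Icc 1 N) (hu : u ∈ Icc 1 N)
    (hw : w ∈ Icc 1 N) (hu₀ : 0 < fract (u * α))
    (hmin : ∀ z ∈ fractOrbit α N, 0 < z → fract (u * α) ≤ z)
    (hmax : ∀ z ∈ fractOrbit α N, z ≤ fract (w * α))
    (hPQ : fract (p * α) < fract (q * α))
    (hgap : ∀ z ∈ fractOrbit α N, z ∉ Ioo (fract (p * α)) (fract (q * α))) :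
    fract (q * α) - fract (p * α) ∈
      ({fract (u * α), 1 - fract (w * α), fract (u * α) + (1 - fract (w * α))} : Set ℝ) := by
  have hle := sub_le_add_of_lt_add hp hq hu hw hu₀ hgap
  rcases lt_trichotomy p q with hpq | rfl | hqp
  · rcases (fract_le_sub_of_lt hp.1 hq.2 hpq hPQ hmin).eq_or_lt with h | h
    · exact .inl h.symm
    · have hpu := lt_add_of_fract_lt_sub hp.1 hu.1 hu₀ hgap h
      have hge := add_le_sub_of_lt_of_lt_add hq.2 hu.2 hpq hpu hmax h
      have hqw := lt_add_of_one_sub_fract_lt_sub hq.1 hw.1 hgap (by linarith)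
      exact .inr (.inr (le_antisymm (hle hpu hqw) hge))
  · exact absurd hPQ (lt_irrefl _)
  · rcases (one_sub_fract_le_sub_of_lt hq.1 hp.2 hqp hPQ hmax).eq_or_lt with h | h
    · exact .inr (.inl h.symm)
    · have hqw := lt_add_of_one_sub_fract_lt_sub hq.1 hw.1 hgap h
      have hge := add_le_sub_of_gt_of_lt_add hp.2 hw.2 hqp hqw hmin h
      have hpu := lt_add_of_fract_lt_sub hp.1 hu.1 hu₀ hgap
        (by linarith [fract_lt_one (w * α)])
      exact .inr (.inr (le_antisymm (hle hpu hqw) hge))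

theorem exists_three_gaps (α : ℝ) (N : ℤ) : ∃ v₁ v₂ v₃ : ℝ,
    ∀ P ∈ fractOrbit α N, ∀ Q ∈ fractOrbit α N, P ≠ Q →
      (∀ z ∈ fractOrbit α N, z ∉ uIoo P Q) → |Q - P| ∈ ({v₁, v₂, v₃} : Set ℝ) := by
  have hfin : (fractOrbit α N).Finite := (finite_Icc 1 N).image _
  by_cases hpos : (fractOrbit α N ∩ Ioi 0).Nonempty
  · obtain ⟨_, ⟨⟨u, hu, rfl⟩, hu₀⟩, hmin⟩ :=
      exists_min_image _ id (hfin.subset inter_subset_left) hpos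
    obtain ⟨_, ⟨w, hw, rfl⟩, hmax⟩ := exists_max_image _ id hfin (hpos.mono inter_subset_left)
    refine ⟨fract (u * α), 1 - fract (w * α), fract (u * α) + (1 - fract (w * α)),
      fun P hP Q hQ hne hgap => ?_⟩
    wlog hPQ : P < Q generalizing P Q
    · rw [abs_sub_comm]
      exact this Q hQ P hP hne.symm (uIoo_comm P Q ▸ hgap) (hne.lt_or_gt.resolve_left hPQ)
    obtain ⟨p, hp, rfl⟩ := hP
    obtain ⟨q, hq, rfl⟩ := hQ
    rw [uIoo_of_lt hPQ] at hgap
    rw [abs_of_pos (sub_pos.2 hPQ)]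
    exact sub_mem_three_gaps hp hq hu hw hu₀ (fun z hz hz₀ => hmin z ⟨hz, hz₀⟩) hmax hPQ hgap
  · refine ⟨0, 0, 0, fun P hP Q hQ hne _ => absurd ?_ hpos⟩
    obtain ⟨p, hp, rfl⟩ := hP
    obtain ⟨q, hq, rfl⟩ := hQ
    rcases hne.lt_or_gt with h | h
    · exact ⟨_, ⟨q, hq, rfl⟩, (fract_nonneg _).trans_lt h⟩
    · exact ⟨_, ⟨p, hp, rfl⟩, (fract_nonneg _).trans_lt h⟩

end ThreeGap

theorem interior_gaps_le_three_general (f : ℝ → ℝ)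
    (hper : ∀ x, f (x + 1) = f x)
    (k : ℕ) (a b m c : ℕ → ℝ) (mm : ℝ)
    (hpiece : ∀ j < k, ∀ x ∈ Set.Ico (a j) (b j), f x = m j * x + c j)
    (hslope : ∀ j < k, |m j| = mm)
    (α : ℝ) (N : ℕ) :
    {g : ℝ | ∃ j < k, ∃ d d' : ℕ, 1 ≤ d ∧ d ≤ N ∧ 1 ≤ d' ∧ d' ≤ N ∧
      Int.fract (d * α) ∈ Set.Ico (a j) (b j) ∧
      Int.fract (d' * α) ∈ Set.Ico (a j) (b j) ∧
      f (d * α) < f (d' * α) ∧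
      (∀ e : ℕ, 1 ≤ e → e ≤ N → f (e * α) ≤ f (d * α) ∨ f (d' * α) ≤ f (e * α)) ∧
      g = f (d' * α) - f (d * α)}.ncard ≤ 3 := by
  obtain ⟨v₁, v₂, v₃, hv⟩ := ThreeGap.exists_three_gaps α N
  have hf : ∀ x, f (fract x) = f x := Function.Periodic.map_fract hper
  have hmem (e : ℕ) (h₁ : 1 ≤ e) (h₂ : e ≤ N) : fract (e * α) ∈ fractOrbit α N :=
    ⟨e, ⟨by omega, by omega⟩, by push_cast; rfl⟩
  refine le_trans (ncard_le_ncard (t := (mm * ·) '' {v₁, v₂, v₃}) ?_ (toFinite _))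
    ((ncard_image_le (toFinite _)).trans (ncard_triple_le _ _ _))
  rintro _ ⟨j, hj, d, d', hd₁, hdN, hd'₁, hd'N, hdI, hd'I, hlt, hadj, rfl⟩
  rw [← hf (d * α), ← hf (d' * α)] at hlt hadj ⊢
  have hgap : ∀ z ∈ fractOrbit α N, z ∉ uIoo (fract (d * α)) (fract (d' * α)) := by
    rintro _ ⟨e, he, rfl⟩
    lift e to ℕ using by linarith [he.1]
    refine notMem_uIoo_of_affineOn ordConnected_Ico (hpiece j hj) hdI hd'I hlt.ne ?_
    rw [uIoo_of_lt hlt]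
    rintro ⟨h₁, h₂⟩
    push_cast at h₁ h₂
    rcases hadj e (by exact_mod_cast he.1) (by exact_mod_cast he.2) with h | h <;>
      rw [← hf (e * α)] at h <;> linarith
  have hne : fract (d * α) ≠ fract (d' * α) := fun h => hlt.ne (by rw [h])
  refine ⟨_, hv _ (hmem d hd₁ hdN) _ (hmem d' hd'₁ hd'N) hne hgap, ?_⟩
  rw [sub_eq_abs_mul_abs_sub_of_affineOn (hpiece j hj) hdI hd'I hlt, hslope j hj]

/-- For a piecewise-linear 1-periodic function, injective on `[0,1)`, whose
pieces all have slopes of the same magnitude, the union of the sets of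
interior gap lengths of the pieces has at most three elements. -/
theorem interior_gaps_le_three (f : ℝ → ℝ)
    (hper : ∀ x, f (x + 1) = f x)
    (hinj : Set.InjOn f (Set.Ico 0 1))
    (k : ℕ) (hk : 0 < k) (a b m c : ℕ → ℝ) (mm : ℝ)
    (hsub : ∀ j < k, 0 ≤ a j ∧ a j < b j ∧ b j ≤ 1)
    (hpiece : ∀ j < k, ∀ x ∈ Set.Ico (a j) (b j), f x = m j * x + c j)
    (hslope : ∀ j < k, |m j| = mm)
    (α : ℝ) (N : ℕ) :
    {g : ℝ | ∃ j < k, ∃ d d' : ℕ, 1 ≤ d ∧ d ≤ N ∧ 1 ≤ d' ∧ d' ≤ N ∧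
      Int.fract (d * α) ∈ Set.Ico (a j) (b j) ∧
      Int.fract (d' * α) ∈ Set.Ico (a j) (b j) ∧
      f (d * α) < f (d' * α) ∧
      (∀ e : ℕ, 1 ≤ e → e ≤ N → f (e * α) ≤ f (d * α) ∨ f (d' * α) ≤ f (e * α)) ∧
      g = f (d' * α) - f (d * α)}.ncard ≤ 3 :=
  interior_gaps_le_three_general f hper k a b m c mm hpiece hslope α N
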